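/- Let α satisfy φ < α < 2, where φ = (1 + √5)/2 is the golden ratio, and let n₁, n₂, n₃, m₁, m₂, k be positive integers such that k ≤ k₀(α) + 1 and (2^k·(2α − 1)/(α − 1))·n₃ ≥ n₁ + n₂ + n₃. Then H_α(n₁, m₁) + H_α(n₂, m₂) + k·n₃ + n₁ + 2·n₂ ≤ G_α(n₁ + n₂ + n₃, m₁ + m₂ + 1), where G_α(n, m) = n·(d_α − 1 + c_α·log₂ m) and H_α(n, m) = n·(d_α + c_α·log₂ m). -/

import Mathlib

open Real

/-- The constant `c_α = (α+1)/((α+1)·log₂(α+1) − α·log₂ α)`. -/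
noncomputable def cA (α : ℝ) : ℝ :=
  (α + 1) / ((α + 1) * logb 2 (α + 1) - α * logb 2 α)

/-- `k₀(α)` is the least `ℓ ∈ ℕ` such that `(α² − α − 1)/(α − 1) ≥ α^(−ℓ)`. -/
noncomputable def k0 (α : ℝ) : ℕ :=
  sInf {ℓ : ℕ | (α ^ 2 - α - 1) / (α - 1) ≥ α ^ (-(ℓ : ℝ))}

/-- The constant `d_α = 2^(k₀(α)+1)·max{k₀(α)+1, 3}·(2α − 1)/(α − 1) + 1`. -/
noncomputable def dA (α : ℝ) : ℝ :=
  2 ^ (k0 α + 1) * max ((k0 α : ℝ) + 1) 3 * (2 * α - 1) / (α - 1) + 1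

/-- `G_α(n, m) = n·(d_α − 1 + c_α·log₂ m)`. -/
noncomputable def G (α : ℝ) (n m : ℕ) : ℝ := (n : ℝ) * (dA α - 1 + cA α * logb 2 m)

/-- `H_α(n, m) = n·(d_α + c_α·log₂ m)`. -/
noncomputable def H (α : ℝ) (n m : ℕ) : ℝ := (n : ℝ) * (dA α + cA α * logb 2 m)

/-!
Since `c_α ≥ 0` and `log₂` is monotone, `H_α(nᵢ, mᵢ) ≤ G_α(nᵢ, m₁ + m₂ + 1) + nᵢ`, and `G_α` is
additive in `n`; this reduces the claim to the linear inequality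
`k·n₃ + 2n₁ + 3n₂ ≤ (d_α − 1)·n₃`. Writing `r = (2α − 1)/(α − 1) ≥ 1`, the hypothesis gives
`3(n₁ + n₂ + n₃) ≤ 3·2^k·r·n₃`, so it suffices that `k − 3 + 3·2^k·r ≤ 2^(k₀+1)·max{k₀+1, 3}·r`,
which holds because `k ≤ k₀ + 1` and `(M − 3)(X − 1) ≥ 0` for `M = max{k₀+1, 3}`, `X = 2^(k₀+1)·r`.
-/

lemma Real.logb_natCast_nonneg {b : ℝ} (hb : 1 < b) (n : ℕ) : 0 ≤ logb b n :=
  div_nonneg (log_natCast_nonneg n) (log_nonneg hb.le)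

lemma Real.logb_natCast_le_logb_natCast {b : ℝ} (hb : 1 < b) {m m' : ℕ} (h : m ≤ m') :
    logb b m ≤ logb b m' := by
  rcases m.eq_zero_or_pos with rfl | hm
  · simpa using logb_natCast_nonneg hb m'
  · exact logb_le_logb_of_le hb (by exact_mod_cast hm) (by exact_mod_cast h)

lemma cA_nonneg {α : ℝ} (hα : 0 < α) : 0 ≤ cA α := by
  have hmono : logb 2 α ≤ logb 2 (α + 1) := logb_le_logb_of_le one_lt_two hα (by linarith)
  have hpos : 0 ≤ logb 2 (α + 1) := logb_nonneg one_lt_two (by linarith)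
  refine div_nonneg (by linarith) ?_
  nlinarith

lemma one_le_two_mul_sub_one_div_sub_one {α : ℝ} (hα : 1 < α) : 1 ≤ (2 * α - 1) / (α - 1) := by
  rw [le_div_iff₀ (by linarith)]
  linarith

lemma natCast_add_three_mul_two_pow_mul_le {k K : ℕ} (hk : k ≤ K + 1) {r : ℝ} (hr : 1 ≤ r) :
    (k : ℝ) + 3 * (2 ^ k * r) ≤ 2 ^ (K + 1) * max ((K : ℝ) + 1) 3 * r + 3 := by
  set M := max ((K : ℝ) + 1) 3
  set X := (2 : ℝ) ^ (K + 1) * r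
  have hkM : (k : ℝ) ≤ M := le_max_of_le_left (by exact_mod_cast hk)
  have hX : 1 ≤ X := one_le_mul_of_one_le_of_one_le (one_le_pow₀ one_le_two) hr
  have hkX : 2 ^ k * r ≤ X :=
    mul_le_mul_of_nonneg_right (pow_le_pow_right₀ one_le_two hk) (by linarith)
  have hM3 : 0 ≤ (M - 3) * (X - 1) := mul_nonneg (by simp [M]) (by linarith)
  calc (k : ℝ) + 3 * (2 ^ k * r) ≤ M + 3 * X := by linarith
    _ ≤ 2 ^ (K + 1) * M * r + 3 := by linarith [show 2 ^ (K + 1) * M * r = M * X by ring]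

lemma natCast_add_three_mul_le_dA {α : ℝ} (hα : 1 < α) {k : ℕ} (hk : k ≤ k0 α + 1) :
    (k : ℝ) + 3 * (2 ^ k * (2 * α - 1) / (α - 1)) ≤ dA α + 2 := by
  have := natCast_add_three_mul_two_pow_mul_le hk (one_le_two_mul_sub_one_div_sub_one hα)
  rw [dA]
  simp only [mul_div_assoc] at this ⊢
  linarith

lemma G_add (α : ℝ) (n n' m : ℕ) : G α (n + n') m = G α n m + G α n' m := by
  simp only [G, Nat.cast_add, add_mul]

lemma H_le_G_add {α : ℝ} (hc : 0 ≤ cA α) (n : ℕ) {m m' : ℕ} (h : m ≤ m') :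
    H α n m ≤ G α n m' + n := by
  have hlog := mul_le_mul_of_nonneg_left (logb_natCast_le_logb_natCast one_lt_two h) hc
  rw [H, G]
  linarith [mul_le_mul_of_nonneg_left hlog n.cast_nonneg]

lemma mul_dA_sub_one_le_G {α : ℝ} (hc : 0 ≤ cA α) (n m : ℕ) : n * (dA α - 1) ≤ G α n m := by
  rw [G, mul_add]
  exact le_add_of_nonneg_right
    (mul_nonneg n.cast_nonneg (mul_nonneg hc (logb_natCast_nonneg one_lt_two m)))

lemma linear_bound_of_le_mul {n₁ n₂ n₃ k s d : ℝ} (hn₁ : 0 ≤ n₁) (hn₃ : 0 ≤ n₃)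
    (h : n₁ + n₂ + n₃ ≤ s * n₃) (hsd : k + 3 * s ≤ d + 2) :
    k * n₃ + 2 * n₁ + 3 * n₂ ≤ n₃ * (d - 1) := by
  linarith [mul_le_mul_of_nonneg_right hsd hn₃]

theorem GHalpha_bound_d_general (α : ℝ) (hφ : (1 + Real.sqrt 5) / 2 < α)
    (n₁ n₂ n₃ m₁ m₂ k : ℕ)
    (hk0 : k ≤ k0 α + 1)
    (h : (n₁ : ℝ) + n₂ + n₃ ≤ 2 ^ k * (2 * α - 1) / (α - 1) * n₃) :
    H α n₁ m₁ + H α n₂ m₂ + (k : ℝ) * n₃ + n₁ + 2 * n₂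
      ≤ G α (n₁ + n₂ + n₃) (m₁ + m₂ + 1) := by
  have hα : 1 < α := one_lt_goldenRatio.trans hφ
  have hc := cA_nonneg (zero_lt_one.trans hα)
  have hH₁ := H_le_G_add hc n₁ (show m₁ ≤ m₁ + m₂ + 1 by omega)
  have hH₂ := H_le_G_add hc n₂ (show m₂ ≤ m₁ + m₂ + 1 by omega)
  have hG₃ := mul_dA_sub_one_le_G hc n₃ (m₁ + m₂ + 1)
  have hlin := linear_bound_of_le_mul (Nat.cast_nonneg n₁) (Nat.cast_nonneg n₃) h
    (natCast_add_three_mul_le_dA hα hk0)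
  rw [G_add, G_add]
  linarith

/-- Lemma 17(d): for `φ < α < 2`, if `k ≤ k₀(α)+1` and
`(2^k(2α−1)/(α−1))·n₃ ≥ n₁ + n₂ + n₃` then
`H_α(n₁,m₁) + H_α(n₂,m₂) + k·n₃ + n₁ + 2n₂ ≤ G_α(n₁+n₂+n₃, m₁+m₂+1)`. -/
theorem GHalpha_bound_d (α : ℝ) (hφ : (1 + Real.sqrt 5) / 2 < α) (hα2 : α < 2)
    (n₁ n₂ n₃ m₁ m₂ k : ℕ)
    (hn₁ : 0 < n₁) (hn₂ : 0 < n₂) (hn₃ : 0 < n₃)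
    (hm₁ : 0 < m₁) (hm₂ : 0 < m₂) (hk : 0 < k)
    (hk0 : k ≤ k0 α + 1)
    (h : (n₁ : ℝ) + n₂ + n₃ ≤ 2 ^ k * (2 * α - 1) / (α - 1) * n₃) :
    H α n₁ m₁ + H α n₂ m₂ + (k : ℝ) * n₃ + n₁ + 2 * n₂
      ≤ G α (n₁ + n₂ + n₃) (m₁ + m₂ + 1) :=
  GHalpha_bound_d_general α hφ n₁ n₂ n₃ m₁ m₂ k hk0 h
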